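/- arXiv:1705.05575 — 2 statements merged into one kernel-verified Lean document; each statement's English description precedes it below -/
import Mathlib

section
/- Let x₀ = Σ_{i=1}^n α_i/3^i be a ternary-rational point with last nonzero digit α_n = 1. Then the function f (digit-wise application of φ with φ(0)=0, φ(1)=2, φ(2)=1) has a jump discontinuity at x₀ of size 1/(2·3^{n-1}): the difference between the limit of f along the representation ending in 0(2)'s-free tail and the value from the two representations of x₀ equals 1/(2·3^{n-1}). -/
/-- φ(0)=0, φ(1)=2, φ(2)=1. -/
def phi (i : ℕ) : ℕ := if i = 1 then 2 else if i = 2 then 1 else i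

lemma phi_le {i : ℕ} (h : i ≤ 2) : phi i ≤ 2 := by
  unfold phi; split_ifs <;> omega

lemma sumC (c : ℕ → ℕ) (hc : ∀ i, c i ≤ 2) :
    Summable (fun i => (c i : ℝ) / 3 ^ (i + 1)) := by
  have hg : Summable (fun i : ℕ => (2 / 3 : ℝ) * (1 / 3) ^ i) :=
    (summable_geometric_of_lt_one (by norm_num) (by norm_num)).mul_left _
  apply Summable.of_nonneg_of_le (fun i => by positivity) (fun i => ?_) hg
  have h2 : (c i : ℝ) ≤ 2 := by exact_mod_cast hc i
  have h3 : (2 / 3 : ℝ) * (1 / 3) ^ i = 2 / 3 ^ (i + 1) := by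
    rw [pow_succ, one_div_pow]; field_simp
  rw [h3]
  gcongr

lemma tail_tsum (c : ℝ) (k : ℕ) : ∑' j : ℕ, c / 3 ^ (j + k) = 3 * c / (2 * 3 ^ k) := by
  have h : ∀ j : ℕ, c / 3 ^ (j + k) = (c / 3 ^ k) * (1 / 3 : ℝ) ^ j := by
    intro j
    rw [pow_add, div_pow, one_pow]
    field_simp
  rw [tsum_congr h, tsum_mul_left, tsum_geometric_of_lt_one (by norm_num) (by norm_num)]
  field_simp
  ring

theorem stmt9 (n : ℕ) (hn : 1 ≤ n) (α : ℕ → ℕ) (hα : ∀ i, α i ≤ 2)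
    (h1 : α (n - 1) = 1) (h0 : ∀ i, n ≤ i → α i = 0) :
    -- β is the other (non-terminating) ternary representation of the same point
    let β : ℕ → ℕ := fun i => if i < n - 1 then α i else if i = n - 1 then 0 else 2
    (∑' i : ℕ, (α i : ℝ) / 3 ^ (i + 1)) = (∑' i : ℕ, (β i : ℝ) / 3 ^ (i + 1)) ∧
    (∑' i : ℕ, (phi (α i) : ℝ) / 3 ^ (i + 1)) -
        (∑' i : ℕ, (phi (β i) : ℝ) / 3 ^ (i + 1)) = 1 / (2 * 3 ^ (n - 1)) := by
  obtain ⟨m, rfl⟩ : ∃ m, n = m + 1 := ⟨n - 1, (Nat.succ_pred_eq_of_pos hn).symm⟩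
  intro β
  simp only [Nat.add_sub_cancel] at h1
  have hβdef : ∀ i, β i = if i < m then α i else if i = m then 0 else 2 := fun i => rfl
  have hβle : ∀ i, β i ≤ 2 := by
    intro i; rw [hβdef]; split_ifs with h h2
    · exact hα i
    · omega
    · omega
  have hβlt : ∀ i, i < m → β i = α i := by
    intro i hi; rw [hβdef, if_pos hi]
  have hβm : β m = 0 := by rw [hβdef]; simp
  have hβtail : ∀ j, β (j + (m + 1)) = 2 := by
    intro j; rw [hβdef]
    rw [if_neg (by omega), if_neg (by omega)]
  have Sβ := sumC β hβle
  have Sφβ := sumC _ (fun i => phi_le (hβle i))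
  -- tsum α is a finite sum
  have hαfin : (∑' i : ℕ, (α i : ℝ) / 3 ^ (i + 1))
      = ∑ i ∈ Finset.range (m + 1), (α i : ℝ) / 3 ^ (i + 1) := by
    apply tsum_eq_sum
    intro i hi
    rw [h0 i (by simpa [Finset.mem_range] using hi)]
    simp
  have hφαfin : (∑' i : ℕ, (phi (α i) : ℝ) / 3 ^ (i + 1))
      = ∑ i ∈ Finset.range (m + 1), (phi (α i) : ℝ) / 3 ^ (i + 1) := by
    apply tsum_eq_sum
    intro i hi
    rw [h0 i (by simpa [Finset.mem_range] using hi)]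
    simp [phi]
  -- split β sums
  have hβsplit := Summable.sum_add_tsum_nat_add (f := fun i => (β i : ℝ) / 3 ^ (i + 1)) (m + 1) Sβ
  have hφβsplit := Summable.sum_add_tsum_nat_add (f := fun i => (phi (β i) : ℝ) / 3 ^ (i + 1)) (m + 1) Sφβ
  -- tails
  have hβtailsum : (∑' j : ℕ, (β (j + (m + 1)) : ℝ) / 3 ^ (j + (m + 1) + 1))
      = 1 / 3 ^ (m + 1) := by
    have h : ∀ j : ℕ, (β (j + (m + 1)) : ℝ) / 3 ^ (j + (m + 1) + 1)
        = (2 : ℝ) / 3 ^ (j + (m + 2)) := by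
      intro j
      rw [hβtail j, show j + (m + 1) + 1 = j + (m + 2) from by omega]
      norm_num
    rw [tsum_congr h, tail_tsum]
    rw [pow_succ, pow_succ]
    ring
  have hφβtailsum : (∑' j : ℕ, (phi (β (j + (m + 1))) : ℝ) / 3 ^ (j + (m + 1) + 1))
      = 1 / (2 * 3 ^ (m + 1)) := by
    have h : ∀ j : ℕ, (phi (β (j + (m + 1))) : ℝ) / 3 ^ (j + (m + 1) + 1)
        = (1 : ℝ) / 3 ^ (j + (m + 2)) := by
      intro j
      rw [hβtail j, show j + (m + 1) + 1 = j + (m + 2) from by omega]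
      norm_num [phi]
    rw [tsum_congr h, tail_tsum]
    rw [pow_succ]
    ring
  -- finite parts agree below m
  have hfin1 : ∑ i ∈ Finset.range m, (β i : ℝ) / 3 ^ (i + 1)
      = ∑ i ∈ Finset.range m, (α i : ℝ) / 3 ^ (i + 1) := by
    apply Finset.sum_congr rfl
    intro i hi
    rw [hβlt i (Finset.mem_range.mp hi)]
  have hfin2 : ∑ i ∈ Finset.range m, (phi (β i) : ℝ) / 3 ^ (i + 1)
      = ∑ i ∈ Finset.range m, (phi (α i) : ℝ) / 3 ^ (i + 1) := by
    apply Finset.sum_congr rfl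
    intro i hi
    rw [hβlt i (Finset.mem_range.mp hi)]
  constructor
  · rw [hαfin, ← hβsplit, hβtailsum, Finset.sum_range_succ, Finset.sum_range_succ,
      hfin1, hβm, h1]
    norm_num
  · rw [hφαfin, ← hφβsplit, hφβtailsum, Finset.sum_range_succ, Finset.sum_range_succ,
      hfin2, hβm, h1]
    simp only [Nat.add_sub_cancel, phi]
    norm_num
    rw [pow_succ]
    ring
end

section
/- The function f : [0,1] → [0,1] obtained by applying φ (φ(0)=0, φ(1)=2, φ(2)=1) digit-wise to ternary expansions (using the representation not ending in all 2's) is nowhere differentiable: at no point of [0,1] does f have a finite derivative. -/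
/-- The n-th ternary digit of x (0-indexed; terminating representation,
i.e. the representation not ending in all 2's). -/
noncomputable def tdigit (x : ℝ) (n : ℕ) : ℕ := (⌊x * 3 ^ (n + 1)⌋).toNat % 3

/-- f obtained by applying φ digit-wise to the ternary expansion. -/
noncomputable def f (x : ℝ) : ℝ := ∑' n : ℕ, (phi (tdigit x n) : ℝ) / 3 ^ (n + 1)

lemma tdigit_lt (x : ℝ) (n : ℕ) : tdigit x n < 3 := Nat.mod_lt _ (by norm_num)

lemma phi_le_two {i : ℕ} (h : i < 3) : phi i ≤ 2 := by
  unfold phi; split_ifs <;> omega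

lemma summable_aux (x : ℝ) :
    Summable (fun n : ℕ => (phi (tdigit x n) : ℝ) / 3 ^ (n + 1)) := by
  refine Summable.of_nonneg_of_le (fun n => by positivity) (fun n => ?_)
    ((summable_geometric_of_lt_one (r := 1/3) (by norm_num) (by norm_num)).mul_left (2/3 : ℝ))
  have h1 : (phi (tdigit x n) : ℝ) ≤ 2 := by
    exact_mod_cast phi_le_two (tdigit_lt x n)
  have h2 : (2/3) * (1/3 : ℝ) ^ n = 2 / 3 ^ (n+1) := by
    rw [pow_succ, div_pow, one_pow, div_mul_div_comm, mul_one, mul_comm (3:ℝ)]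
  rw [h2]
  gcongr

set_option maxHeartbeats 1000000 in
lemma tflip (x : ℝ) (hx0 : 0 ≤ x) (hx1 : x < 1) (n e : ℕ) (he : e < 3) :
    0 ≤ x + ((e : ℝ) - tdigit x n) / 3 ^ (n + 1) ∧
    x + ((e : ℝ) - tdigit x n) / 3 ^ (n + 1) < 1 ∧
    ∀ m, tdigit (x + ((e : ℝ) - tdigit x n) / 3 ^ (n + 1)) m
      = if m = n then e else tdigit x m := by
  set d := tdigit x n with hd
  clear_value d
  set M := ⌊x * 3 ^ (n + 1)⌋ with hM
  clear_value M
  have hP : (0 : ℝ) < 3 ^ (n + 1) := by positivity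
  have hM0 : 0 ≤ M := hM ▸ Int.floor_nonneg.2 (mul_nonneg hx0 (by positivity))
  have hdM : (d : ℤ) = M % 3 := by
    simp only [hd, tdigit, ← hM]; push_cast; omega
  have hd3 : d < 3 := hd ▸ tdigit_lt x n
  have hMlt : M < 3 ^ (n + 1) := by
    rw [hM, Int.floor_lt]
    push_cast
    nlinarith
  have hdvdP : (3 : ℤ) ∣ 3 ^ (n + 1) := dvd_pow_self 3 (Nat.succ_ne_zero n)
  set y := x + ((e : ℝ) - d) / 3 ^ (n + 1) with hy
  clear_value y
  have hyP : y * 3 ^ (n + 1) = x * 3 ^ (n + 1) + ((e : ℝ) - d) := by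
    rw [hy]; field_simp
  have hflM : (M : ℝ) ≤ x * 3 ^ (n + 1) := hM ▸ Int.floor_le _
  have hflM' : x * 3 ^ (n + 1) < M + 1 := hM ▸ Int.lt_floor_add_one _
  have hdle : (d : ℤ) ≤ M := by omega
  have hMd : M - d ≤ 3 ^ (n + 1) - 3 := by omega
  have hdleR : (d : ℝ) ≤ (M : ℝ) := by exact_mod_cast hdle
  have hMdR : (M : ℝ) - d ≤ 3 ^ (n + 1) - 3 := by exact_mod_cast hMd
  have he0 : (0:ℝ) ≤ e := Nat.cast_nonneg e
  have he2 : (e:ℝ) ≤ 2 := by exact_mod_cast Nat.lt_succ_iff.mp he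
  have hy0 : 0 ≤ y := by
    have h : (0:ℝ) ≤ y * 3 ^ (n + 1) := by rw [hyP]; linarith
    nlinarith
  have hy1 : y < 1 := by
    have h : y * 3 ^ (n + 1) < 3 ^ (n + 1) := by rw [hyP]; linarith
    nlinarith
  have hfn : ⌊y * 3 ^ (n + 1)⌋ = M + ((e : ℤ) - d) := by
    rw [hyP]
    have : (e : ℝ) - d = (((e : ℤ) - d : ℤ) : ℝ) := by push_cast; ring
    rw [this, Int.floor_add_intCast, ← hM]
  refine ⟨hy0, hy1, fun m => ?_⟩
  rcases lt_trichotomy m n with hmn | rfl | hmn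
  · -- m < n : digit unchanged
    rw [if_neg hmn.ne]
    set A := ⌊x * 3 ^ (m + 1)⌋ with hA
    have hpm : (0:ℝ) < (3:ℝ) ^ (n - m) := by positivity
    have hmul : (3 : ℝ) ^ (m + 1) * 3 ^ (n - m) = 3 ^ (n + 1) := by
      rw [← pow_add]; congr 1; omega
    have hA1 : (A : ℝ) ≤ x * 3 ^ (m + 1) := Int.floor_le _
    have hA2 : x * 3 ^ (m + 1) < A + 1 := Int.lt_floor_add_one _
    have hmulZ : ((3:ℤ) ^ (m + 1) : ℤ) * 3 ^ (n - m) = 3 ^ (n + 1) := by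
      rw [← pow_add]; congr 1; omega
    have hBl : A * 3 ^ (n - m) ≤ M := by
      rw [hM, Int.le_floor]
      push_cast
      nlinarith
    have hBu : M < (A + 1) * 3 ^ (n - m) := by
      rw [hM, Int.floor_lt]
      push_cast
      nlinarith
    set t := (3 : ℤ) ^ (n - m) with ht
    have htdvd : (3 : ℤ) ∣ t := dvd_pow_self 3 (by omega)
    have hCdvd : (3 : ℤ) ∣ A * t := htdvd.mul_left A
    -- integer facts: d ≤ M - A*t and M - A*t - d ≤ t - 3
    have hBu' : M < A * t + t := by nlinarith
    have key1 : (d : ℤ) ≤ M - A * t := by omega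
    have key2 : M - A * t - d ≤ t - 3 := by omega
    have key1R : (d : ℝ) ≤ (M : ℝ) - (A : ℝ) * (3:ℝ) ^ (n - m) := by
      have h := key1; rw [ht] at h
      have h2 : ((d:ℤ):ℝ) ≤ ((M - A * 3 ^ (n-m) : ℤ) : ℝ) := by exact_mod_cast h
      push_cast at h2; linarith
    have key2R : (M : ℝ) - (A:ℝ) * (3:ℝ) ^ (n - m) - d ≤ (3:ℝ) ^ (n - m) - 3 := by
      have h := key2; rw [ht] at h
      have h2 : ((M - A * 3 ^ (n-m) - d : ℤ):ℝ) ≤ (((3:ℤ) ^ (n-m) - 3 : ℤ) : ℝ) := by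
        exact_mod_cast h
      push_cast at h2; linarith
    have hfloor : ⌊y * 3 ^ (m + 1)⌋ = A := by
      rw [Int.floor_eq_iff]
      constructor
      · have h1 : (A:ℝ) * 3 ^ (n - m) ≤ (y * 3 ^ (m + 1)) * 3 ^ (n - m) := by
          rw [mul_assoc, hmul, hyP]; linarith
        exact le_of_mul_le_mul_right h1 hpm
      · have h2 : (y * 3 ^ (m + 1)) * 3 ^ (n - m) < ((A:ℝ) + 1) * 3 ^ (n - m) := by
          rw [mul_assoc, hmul, hyP]; nlinarith
        exact_mod_cast lt_of_mul_lt_mul_right h2 hpm.le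
    simp only [tdigit, hfloor, ← hA]
  · -- m = n : digit becomes e
    rw [if_pos rfl]
    simp only [tdigit, hfn]
    omega
  · -- m > n : digit unchanged
    rw [if_neg hmn.ne']
    have hmul : (3 : ℝ) ^ (n + 1) * 3 ^ (m - n) = 3 ^ (m + 1) := by
      rw [← pow_add]; congr 1; omega
    have hym : y * 3 ^ (m + 1) = x * 3 ^ (m + 1) + ((e : ℝ) - d) * 3 ^ (m - n) := by
      rw [hy, ← hmul, add_mul, div_mul_eq_mul_div,
        mul_comm ((3:ℝ) ^ (n+1)) ((3:ℝ) ^ (m-n)), mul_div_assoc,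
        mul_div_cancel_right₀ _ hP.ne']
    have hcast : ((e : ℝ) - d) * 3 ^ (m - n) = ((((e : ℤ) - d) * 3 ^ (m - n) : ℤ) : ℝ) := by
      push_cast; ring
    have hfm : ⌊y * 3 ^ (m + 1)⌋ = ⌊x * 3 ^ (m + 1)⌋ + ((e : ℤ) - d) * 3 ^ (m - n) := by
      rw [hym, hcast, Int.floor_add_intCast]
    have hA0 : 0 ≤ ⌊x * 3 ^ (m + 1)⌋ := Int.floor_nonneg.2 (by positivity)
    have hy0' : 0 ≤ ⌊y * 3 ^ (m + 1)⌋ := Int.floor_nonneg.2 (mul_nonneg hy0 (by positivity))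
    have hsdvd : (3 : ℤ) ∣ ((e : ℤ) - d) * 3 ^ (m - n) :=
      (dvd_pow_self 3 (by omega)).mul_left _
    simp only [tdigit, hfm]
    set A := ⌊x * 3 ^ (m + 1)⌋
    set s := ((e : ℤ) - d) * 3 ^ (m - n)
    rw [hfm] at hy0'
    omega

lemma f_flip_diff (x : ℝ) (hx0 : 0 ≤ x) (hx1 : x < 1) (n e : ℕ) (he : e < 3) :
    f (x + ((e : ℝ) - tdigit x n) / 3 ^ (n + 1)) - f x
      = ((phi e : ℝ) - phi (tdigit x n)) / 3 ^ (n + 1) := by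
  obtain ⟨-, -, hdig⟩ := tflip x hx0 hx1 n e he
  set y := x + ((e : ℝ) - tdigit x n) / 3 ^ (n + 1) with hy
  rw [f, f, ← Summable.tsum_sub (summable_aux y) (summable_aux x)]
  have hfun : (fun m => (phi (tdigit y m) : ℝ) / 3 ^ (m + 1)
        - (phi (tdigit x m) : ℝ) / 3 ^ (m + 1))
      = fun m => if m = n then ((phi e : ℝ) - phi (tdigit x n)) / 3 ^ (n + 1) else 0 := by
    funext m
    rw [hdig m]
    split_ifs with h
    · subst h; ring
    · rw [sub_self]
  rw [hfun, tsum_ite_eq]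

lemma slope_flip (x : ℝ) (hx0 : 0 ≤ x) (hx1 : x < 1) (n e : ℕ) (he : e < 3)
    (hne : e ≠ tdigit x n) :
    slope f x (x + ((e : ℝ) - tdigit x n) / 3 ^ (n + 1))
      = ((phi e : ℝ) - phi (tdigit x n)) / ((e : ℝ) - tdigit x n) := by
  have hP : (0 : ℝ) < 3 ^ (n + 1) := by positivity
  have hed : (e : ℝ) - tdigit x n ≠ 0 := by
    rw [sub_ne_zero]
    exact_mod_cast hne
  rw [slope_def_field, f_flip_diff x hx0 hx1 n e he]
  rw [add_sub_cancel_left]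
  rw [div_div_div_cancel_right₀]
  exact hP.ne'

noncomputable def qq (x : ℝ) (j n : ℕ) : ℝ :=
  ((phi ((tdigit x n + j) % 3) : ℝ) - phi (tdigit x n))
    / ((((tdigit x n + j) % 3 : ℕ) : ℝ) - tdigit x n)

lemma gap (x : ℝ) (n : ℕ) : (3/2 : ℝ) ≤ |qq x 1 n - qq x 2 n| := by
  have hd3 := tdigit_lt x n
  unfold qq
  rcases (by omega : tdigit x n = 0 ∨ tdigit x n = 1 ∨ tdigit x n = 2) with h | h | h <;>
    rw [h] <;> norm_num [phi] <;>
    rw [abs_of_nonneg (by norm_num : (0:ℝ) ≤ 3/2)]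

lemma key_tendsto (x L : ℝ) (hx0 : 0 ≤ x) (hlt : x < 1)
    (hL : Filter.Tendsto (slope f x) (nhdsWithin x (Set.Icc (0:ℝ) 1 \ {x})) (nhds L))
    (j : ℕ) (hj0 : 0 < j) (hj3 : j < 3) :
    Filter.Tendsto (qq x j) Filter.atTop (nhds L) := by
  set E : ℕ → ℕ := fun n => (tdigit x n + j) % 3 with hE
  have hE3 : ∀ n, E n < 3 := fun n => Nat.mod_lt _ (by norm_num)
  have hEne : ∀ n, E n ≠ tdigit x n := by
    intro n
    have := tdigit_lt x n
    simp only [hE]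
    omega
  set Y : ℕ → ℝ := fun n => x + ((E n : ℝ) - tdigit x n) / 3 ^ (n + 1) with hY
  have hmem : ∀ n, Y n ∈ Set.Icc (0:ℝ) 1 \ {x} := by
    intro n
    obtain ⟨h0, h1, -⟩ := tflip x hx0 hlt n (E n) (hE3 n)
    refine ⟨⟨h0, h1.le⟩, ?_⟩
    simp only [Set.mem_singleton_iff, hY]
    intro hcon
    have hP : (0:ℝ) < 3 ^ (n + 1) := by positivity
    have hc0 : ((E n : ℝ) - tdigit x n) / 3 ^ (n + 1) = 0 := by linarith
    have : (E n : ℝ) - tdigit x n = 0 := by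
      field_simp at hc0; exact_mod_cast hc0
    rw [sub_eq_zero] at this
    exact hEne n (by exact_mod_cast this)
  have htendY : Filter.Tendsto Y Filter.atTop (nhds x) := by
    have hbound : ∀ n : ℕ, ‖Y n - x‖ ≤ (1/3 : ℝ) ^ n := by
      intro n
      have hP : (0:ℝ) < 3 ^ (n + 1) := by positivity
      have h1 : (0:ℝ) ≤ E n := Nat.cast_nonneg _
      have h2 : (E n : ℝ) ≤ 2 := by exact_mod_cast Nat.lt_succ_iff.mp (hE3 n)
      have h3 : (0:ℝ) ≤ tdigit x n := Nat.cast_nonneg _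
      have h4 : (tdigit x n : ℝ) ≤ 2 := by
        exact_mod_cast Nat.lt_succ_iff.mp (tdigit_lt x n)
      have h5 : Y n - x = ((E n : ℝ) - tdigit x n) / 3 ^ (n + 1) := by
        rw [hY]; ring
      rw [h5, Real.norm_eq_abs, abs_div, abs_of_pos hP]
      have h6 : |(E n : ℝ) - tdigit x n| ≤ 3 := by
        rw [abs_le]; constructor <;> linarith
      have h7 : (1/3 : ℝ) ^ n = 3 / 3 ^ (n + 1) := by
        rw [pow_succ, div_pow, one_pow]
        field_simp
      rw [h7]
      gcongr
    have h0 : Filter.Tendsto (fun n : ℕ => (1/3 : ℝ) ^ n) Filter.atTop (nhds 0) :=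
      tendsto_pow_atTop_nhds_zero_of_lt_one (by norm_num) (by norm_num)
    have := squeeze_zero_norm hbound h0
    have h8 := this.add_const x
    simpa using h8
  have hq := hL.comp (tendsto_nhdsWithin_iff.mpr ⟨htendY, Filter.Eventually.of_forall hmem⟩)
  refine hq.congr fun n => ?_
  show slope f x (Y n) = qq x j n
  rw [hY]
  exact slope_flip x hx0 hlt n (E n) (hE3 n) (hEne n)

theorem stmt10 :
    ∀ x ∈ Set.Icc (0 : ℝ) 1, ¬ ∃ L : ℝ, HasDerivWithinAt f L (Set.Icc 0 1) x := by
  rintro x ⟨hx0, hx1⟩ ⟨L, hL⟩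
  rw [hasDerivWithinAt_iff_tendsto_slope] at hL
  rcases eq_or_lt_of_le hx1 with heq | hlt
  · -- x = 1
    subst heq
    have hf1 : f 1 = 0 := by
      have hdig : ∀ m, tdigit 1 m = 0 := by
        intro m
        unfold tdigit
        rw [one_mul]
        have h3 : (3:ℝ) ^ (m+1) = ((3 ^ (m+1) : ℤ) : ℝ) := by push_cast; ring
        rw [h3, Int.floor_intCast]
        have h4 : ((3:ℤ) ^ (m+1)).toNat = 3 ^ (m+1) := by
          rw [show ((3:ℤ) ^ (m+1)) = ((3 ^ (m+1) : ℕ) : ℤ) by push_cast; ring,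
            Int.toNat_natCast]
        rw [h4, pow_succ, Nat.mul_mod_left]
      simp [f, hdig, phi]
    have hpow : ∀ n : ℕ, (3:ℝ) ≤ 3 ^ (n+1) := by
      intro n
      calc (3:ℝ) = 3 ^ 1 := (pow_one 3).symm
      _ ≤ 3 ^ (n+1) := pow_le_pow_right₀ (by norm_num) (by omega)
    set y : ℕ → ℝ := fun n => 1 - 1 / 3 ^ (n+1) with hydef
    have hymem : ∀ n, y n ∈ Set.Icc (0:ℝ) 1 \ {(1:ℝ)} := by
      intro n
      have hP : (0:ℝ) < 3 ^ (n+1) := by positivity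
      have ht1 : (1:ℝ) / 3 ^ (n+1) ≤ 1/3 :=
        one_div_le_one_div_of_le (by norm_num) (hpow n)
      have ht2 : (0:ℝ) < 1 / 3 ^ (n+1) := by positivity
      refine ⟨⟨by simp only [hydef]; linarith, by simp only [hydef]; linarith⟩, ?_⟩
      simp only [Set.mem_singleton_iff, hydef]
      intro hcon
      linarith
    have htend : Filter.Tendsto y Filter.atTop (nhds 1) := by
      have h0 : Filter.Tendsto (fun n : ℕ => (1/3 : ℝ) ^ (n+1)) Filter.atTop (nhds 0) :=
        (tendsto_pow_atTop_nhds_zero_of_lt_one (by norm_num) (by norm_num)).comp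
          (Filter.tendsto_add_atTop_nat 1)
      have h1 : Filter.Tendsto (fun n : ℕ => (1:ℝ) / 3 ^ (n+1)) Filter.atTop (nhds 0) := by
        refine h0.congr fun n => ?_
        rw [div_pow, one_pow]
      have h2 : Filter.Tendsto (fun n : ℕ => (1:ℝ) - 1 / 3 ^ (n+1)) Filter.atTop
          (nhds (1 - 0)) := tendsto_const_nhds.sub h1
      rw [hydef]
      simpa only [sub_zero] using h2
    have hq := hL.comp (tendsto_nhdsWithin_iff.mpr ⟨htend, Filter.Eventually.of_forall hymem⟩)
    have hdig0 : ∀ n, tdigit (y n) 0 = 2 := by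
      intro n
      have hP : (0:ℝ) < 3 ^ (n+1) := by positivity
      have ht1 : (3:ℝ) / 3 ^ (n+1) ≤ 1 := by
        rw [div_le_one hP]; exact hpow n
      have ht2 : (0:ℝ) < 3 / 3 ^ (n+1) := by positivity
      unfold tdigit
      have hfl : ⌊y n * 3 ^ (0+1)⌋ = 2 := by
        rw [Int.floor_eq_iff]
        simp only [hydef]
        have e1 : (y n) * 3 ^ (0+1) = 3 - 3 / 3 ^ (n+1) := by
          simp only [hydef]; ring
        rw [e1]
        constructor
        · push_cast; linarith
        · push_cast; linarith
      rw [hfl]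
      rfl
    have hflow : ∀ n, (1/3 : ℝ) ≤ f (y n) := by
      intro n
      have h := Summable.le_tsum (summable_aux (y n)) 0 (fun j _ => by positivity)
      rw [hdig0 n] at h
      have h' : (1:ℝ)/3 = (phi 2 : ℝ) / 3 ^ (0+1) := by norm_num [phi]
      rw [h']
      exact h
    have hslope : ∀ n, slope f 1 (y n) ≤ -(3:ℝ) ^ n := by
      intro n
      have hP : (0:ℝ) < 3 ^ (n+1) := by positivity
      have h1 : y n - 1 = -(1 / 3 ^ (n+1)) := by simp only [hydef]; ring
      rw [slope_def_field, hf1, sub_zero, h1, div_neg, div_div_eq_mul_div, div_one]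
      have hps : (3:ℝ) ^ (n+1) = 3 ^ n * 3 := pow_succ 3 n
      nlinarith [hflow n, pow_pos (by norm_num : (0:ℝ) < 3) n]
    have h1 : ∀ᶠ n in Filter.atTop, L - 1 < slope f 1 (y n) := by
      have := hq.eventually (eventually_gt_nhds (by linarith : L - 1 < L))
      simpa [Function.comp] using this
    have h2 : ∀ᶠ n : ℕ in Filter.atTop, (1:ℝ) - L < 3 ^ n :=
      (tendsto_pow_atTop_atTop_of_one_lt (by norm_num : (1:ℝ) < 3)).eventually_gt_atTop _
    obtain ⟨n, hn1, hn2⟩ := (h1.and h2).exists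
    have := hslope n
    linarith
  · -- x < 1
    have key1 := key_tendsto x L hx0 hlt hL 1 (by norm_num) (by norm_num)
    have key2 := key_tendsto x L hx0 hlt hL 2 (by norm_num) (by norm_num)
    have h0 : Filter.Tendsto (fun n => qq x 1 n - qq x 2 n) Filter.atTop (nhds 0) := by
      simpa using key1.sub key2
    obtain ⟨N, hN⟩ := Metric.tendsto_atTop.mp h0 (3/2) (by norm_num)
    have hN' := hN N le_rfl
    rw [Real.dist_eq, sub_zero] at hN'
    linarith [gap x N]
end
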